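/- Let G < q ≤ q_f, where G = (1+√5)/2 and q_f is the root in (1,2) of x³ = 2x² − x + 1. If x ∈ [0,1/(q-1)] has a unique expansion (a_n)_{n≥1} in base q, then (a_n) belongs to the set {0^k(10)^∞, 1^k(01)^∞, 0^∞, 1^∞ : k ≥ 0}, i.e., (a_n) is either the all-zero sequence, the all-one sequence, or consists of a (possibly empty) constant prefix 0^k followed by the periodic tail (10)^∞, or a constant prefix 1^k followed by the periodic tail (01)^∞. -/

import Mathlib

noncomputable section

/-- `a` is an expansion of `x` in base `q`: all digits `a n` lie in `{0,1}` and
`x = Σ_{n≥1} a_n q^{-n}` (here `a n` is the `(n+1)`-st digit, i.e. indexing is 0-based). -/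
def IsExpansion (q x : ℝ) (a : ℕ → ℕ) : Prop :=
  (∀ n, a n ≤ 1) ∧ x = ∑' n : ℕ, (a n : ℝ) / q ^ (n + 1)

/-- The set of expansions of `x` in base `q`. -/
def expansionsOf (q x : ℝ) : Set (ℕ → ℕ) := {a | IsExpansion q x a}

/-- `U_q`: the set of `x ∈ [0, 1/(q-1)]` having a unique expansion in base `q`. -/
def uniqueExpansionSet (q : ℝ) : Set ℝ :=
  {x | x ∈ Set.Icc 0 (1 / (q - 1)) ∧ ∃! a, IsExpansion q x a}

/-- `B_m` (for finite `m`): bases `q ∈ (G, 2)` for which some `x ∈ I_q` has exactly `m`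
expansions in base `q`. -/
def B (m : ℕ) : Set ℝ :=
  {q | q ∈ Set.Ioo ((1 + Real.sqrt 5) / 2) 2 ∧
    ∃ x ∈ Set.Icc (0:ℝ) (1 / (q - 1)), Cardinal.mk (expansionsOf q x) = m}

/-- `B_{ℵ₀}`: bases `q ∈ (G, 2)` for which some `x ∈ I_q` has exactly countably infinitely
many expansions in base `q`. -/
def Baleph0 : Set ℝ :=
  {q | q ∈ Set.Ioo ((1 + Real.sqrt 5) / 2) 2 ∧
    ∃ x ∈ Set.Icc (0:ℝ) (1 / (q - 1)), Cardinal.mk (expansionsOf q x) = Cardinal.aleph0}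

/-- The Thue–Morse sequence: `thueMorse n` is the parity of the number of 1s in the
binary expansion of `n`. -/
def thueMorse (n : ℕ) : ℕ := ((Nat.digits 2 n).count 1) % 2

/-- A digit `a m` of an expansion of `x` in base `q` is forced if every expansion of `x`
agreeing with `a` before position `m` also agrees at position `m`. -/
def Forced (q x : ℝ) (a : ℕ → ℕ) (m : ℕ) : Prop :=
  ∀ c : ℕ → ℕ, IsExpansion q x c → (∀ i < m, c i = a i) → c m = a m

/-!
Uniqueness forces every digit: if `a n` could be swapped for the other digit and the remaining
value re-expanded greedily, `x` would have a second expansion. So `a n = 1` forces the value of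
the tail after position `n` above `1/(q-1) - 1`, and `a n = 0` forces it below `1`. Applied to the
factors `100` and `011` these bounds give `q³ - 2q² + q - 1 > 0`, which fails for `1 < q ≤ q_f`.
Hence once two consecutive digits differ, the expansion alternates from then on.
-/

open Finset Filter Topology

section Expansions

variable {q : ℝ}

def digitValue (q : ℝ) (b : ℕ → ℕ) : ℝ := ∑' n, (b n : ℝ) / q ^ (n + 1)

lemma tsum_one_div_pow_succ (hq : 1 < q) : ∑' n : ℕ, 1 / q ^ (n + 1) = 1 / (q - 1) := by
  have hq0 : 0 < q := zero_lt_one.trans hq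
  have hgeom := tsum_geometric_of_lt_one (inv_nonneg.2 hq0.le) (inv_lt_one_of_one_lt₀ hq)
  simp_rw [one_div, pow_succ', mul_inv, tsum_mul_left, ← inv_pow, hgeom]
  field_simp

lemma summable_digits (hq : 1 < q) {b : ℕ → ℕ} (hb : ∀ n, b n ≤ 1) :
    Summable fun n => (b n : ℝ) / q ^ (n + 1) := by
  have hr : q⁻¹ < 1 := inv_lt_one_of_one_lt₀ hq
  refine .of_nonneg_of_le (fun n => by positivity) (fun n => ?_)
    ((summable_geometric_of_lt_one (by positivity) hr).mul_left q⁻¹)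
  rw [inv_pow, ← mul_inv, ← pow_succ', ← one_div]
  gcongr
  exact_mod_cast hb n

lemma digitValue_nonneg (hq : 1 < q) (b : ℕ → ℕ) : 0 ≤ digitValue q b :=
  tsum_nonneg fun n => div_nonneg (Nat.cast_nonneg _) (pow_nonneg (by linarith) _)

lemma digitValue_le (hq : 1 < q) {b : ℕ → ℕ} (hb : ∀ n, b n ≤ 1) :
    digitValue q b ≤ 1 / (q - 1) := by
  rw [← tsum_one_div_pow_succ hq]
  refine (summable_digits hq hb).tsum_le_tsum (fun n => ?_)
    (by simpa using summable_digits hq (b := fun _ => 1) fun _ => le_rfl)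
  gcongr
  exact_mod_cast hb n

lemma digitValue_eq_sum_add (hq : 1 < q) {b : ℕ → ℕ} (hb : ∀ n, b n ≤ 1) (k : ℕ) :
    digitValue q b =
      ∑ i ∈ range k, (b i : ℝ) / q ^ (i + 1) + digitValue q (fun n => b (n + k)) / q ^ k := by
  rw [digitValue, ← (summable_digits hq hb).sum_add_tsum_nat_add k, digitValue,
    ← tsum_div_const]
  congr 1
  refine tsum_congr fun n => ?_
  rw [add_right_comm, pow_add, div_div]

lemma digitValue_tail_eq (hq : 1 < q) {b : ℕ → ℕ} (hb : ∀ n, b n ≤ 1) (k : ℕ) :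
    digitValue q (fun n => b (n + k)) =
      (b k + digitValue q (fun n => b (n + (k + 1)))) / q := by
  have h := digitValue_eq_sum_add hq (fun n => hb (n + k)) 1
  simp only [range_one, sum_singleton, zero_add, pow_one, add_right_comm _ 1 k] at h
  rw [h, add_div]
  simp only [add_assoc]

lemma digitValue_eq_of_eqOn (hq : 1 < q) {a b : ℕ → ℕ} (ha : ∀ n, a n ≤ 1)
    (hb : ∀ n, b n ≤ 1) {k : ℕ} (hab : ∀ i < k, a i = b i)
    (htail : digitValue q (fun n => a (n + k)) = digitValue q (fun n => b (n + k))) :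
    digitValue q a = digitValue q b := by
  rw [digitValue_eq_sum_add hq ha k, digitValue_eq_sum_add hq hb k, htail,
    sum_congr rfl fun i hi => by rw [hab i (mem_range.1 hi)]]

end Expansions

section Greedy

variable {q z : ℝ}

def greedyRemainder (q z : ℝ) : ℕ → ℝ
  | 0 => z
  | n + 1 => if 1 ≤ q * greedyRemainder q z n then q * greedyRemainder q z n - 1
      else q * greedyRemainder q z n

def greedyDigit (q z : ℝ) (n : ℕ) : ℕ := if 1 ≤ q * greedyRemainder q z n then 1 else 0

lemma greedyDigit_le_one (n : ℕ) : greedyDigit q z n ≤ 1 := by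
  unfold greedyDigit; split_ifs <;> simp

lemma greedyRemainder_succ (n : ℕ) :
    greedyRemainder q z (n + 1) = q * greedyRemainder q z n - greedyDigit q z n := by
  simp only [greedyRemainder, greedyDigit]
  split_ifs <;> simp

lemma greedyRemainder_mem (hq : 1 < q) (hq2 : q ≤ 2) (hz : z ∈ Set.Icc 0 (1 / (q - 1)))
    (n : ℕ) : greedyRemainder q z n ∈ Set.Icc 0 (1 / (q - 1)) := by
  have hq1 : 0 < q - 1 := by linarith
  induction n with
  | zero => exact hz
  | succ n ih =>
    obtain ⟨h0, h1⟩ := ih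
    have hmax : q * (1 / (q - 1)) - 1 = 1 / (q - 1) := by field_simp; ring
    have hone : 1 ≤ 1 / (q - 1) := by rw [le_div_iff₀ hq1]; linarith
    simp only [greedyRemainder]
    split_ifs with h
    · exact ⟨by linarith, by nlinarith⟩
    · exact ⟨by positivity, by linarith⟩

lemma sum_greedyDigit (hq : 1 < q) (n : ℕ) :
    ∑ i ∈ range n, (greedyDigit q z i : ℝ) / q ^ (i + 1) =
      z - greedyRemainder q z n / q ^ n := by
  have hq0 : q ≠ 0 := by positivity
  induction n with
  | zero => simp [greedyRemainder]
  | succ n ih =>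
    rw [sum_range_succ, ih, greedyRemainder_succ, pow_succ]
    field_simp
    ring

lemma digitValue_greedyDigit (hq : 1 < q) (hq2 : q ≤ 2) (hz : z ∈ Set.Icc 0 (1 / (q - 1))) :
    digitValue q (greedyDigit q z) = z := by
  have hq0 : 0 < q := by linarith
  have hrem := greedyRemainder_mem hq hq2 hz
  have hsmall : Tendsto (fun n => greedyRemainder q z n / q ^ n) atTop (𝓝 0) := by
    have hgeom := (tendsto_pow_atTop_nhds_zero_of_lt_one (inv_nonneg.2 hq0.le)
      (inv_lt_one_of_one_lt₀ hq)).const_mul (1 / (q - 1))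
    rw [mul_zero] at hgeom
    refine squeeze_zero (fun n => div_nonneg (hrem n).1 (by positivity)) (fun n => ?_) hgeom
    rw [inv_pow, ← div_eq_mul_inv]
    gcongr
    exact (hrem n).2
  refine ((hasSum_iff_tendsto_nat_of_nonneg (fun n => by positivity) z).2 ?_).tsum_eq
  simpa [sum_greedyDigit hq] using hsmall.const_sub z

end Greedy

section UniqueExpansion

variable {q x : ℝ} {a : ℕ → ℕ}

lemma digit_eq_of_unique (hq : 1 < q) (hq2 : q ≤ 2) (ha : IsExpansion q x a)
    (huniq : ∀ b, IsExpansion q x b → b = a) {n d : ℕ} (hd : d ≤ 1)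
    (hz : a n + digitValue q (fun j => a (j + (n + 1))) - d ∈ Set.Icc 0 (1 / (q - 1))) :
    d = a n := by
  set c := greedyDigit q (a n + digitValue q (fun j => a (j + (n + 1))) - d)
  let b : ℕ → ℕ := fun i => if i < n then a i else if i = n then d else c (i - (n + 1))
  have hb : ∀ i, b i ≤ 1 := fun i => by
    dsimp only [b]; split_ifs
    exacts [ha.1 i, hd, greedyDigit_le_one _]
  have hbn : b n = d := by simp [b]
  have hbtail : (fun j => b (j + (n + 1))) = c := funext fun j => by
    simp only [b, if_neg (show ¬ j + (n + 1) < n by omega),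
      if_neg (show j + (n + 1) ≠ n by omega), Nat.add_sub_cancel]
  have hvalue : digitValue q b = digitValue q a := by
    refine digitValue_eq_of_eqOn hq hb ha.1 (k := n) (fun i hi => if_pos hi) ?_
    rw [digitValue_tail_eq hq hb, digitValue_tail_eq hq ha.1, hbn, hbtail,
      digitValue_greedyDigit hq hq2 hz]
    ring
  rw [← hbn, huniq b ⟨hb, ha.2.trans hvalue.symm⟩]

lemma lt_digitValue_tail_of_eq_one (hq : 1 < q) (hq2 : q ≤ 2) (ha : IsExpansion q x a)
    (huniq : ∀ b, IsExpansion q x b → b = a) {n : ℕ} (h : a n = 1) :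
    1 / (q - 1) - 1 < digitValue q (fun j => a (j + (n + 1))) := by
  by_contra! hle
  have h0 := digit_eq_of_unique hq hq2 ha huniq (n := n) (d := 0) zero_le_one
    (by simp only [h, Nat.cast_one, Nat.cast_zero, sub_zero, Set.mem_Icc]
        exact ⟨by linarith [digitValue_nonneg hq fun j => a (j + (n + 1))], by linarith⟩)
  omega

lemma digitValue_tail_lt_one_of_eq_zero (hq : 1 < q) (hq2 : q ≤ 2) (ha : IsExpansion q x a)
    (huniq : ∀ b, IsExpansion q x b → b = a) {n : ℕ} (h : a n = 0) :
    digitValue q (fun j => a (j + (n + 1))) < 1 := by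
  by_contra! hle
  have h1 := digit_eq_of_unique hq hq2 ha huniq (n := n) (d := 1) le_rfl
    (by simp only [h, Nat.cast_one, Nat.cast_zero, zero_add, Set.mem_Icc]
        exact ⟨by linarith, by linarith [digitValue_le hq fun j => ha.1 (j + (n + 1))]⟩)
  omega

lemma succ_ne_of_ne_of_unique (hq : 1 < q) (hq2 : q ≤ 2)
    (hcubic : q ^ 3 - 2 * q ^ 2 + q - 1 ≤ 0) (ha : IsExpansion q x a)
    (huniq : ∀ b, IsExpansion q x b → b = a) (n : ℕ)
    (hne : a n ≠ a (n + 1)) : a (n + 1) ≠ a (n + 2) := by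
  intro heq
  set t : ℕ → ℝ := fun k => digitValue q (fun j => a (j + k))
  have hq1 : 0 < q - 1 := by linarith
  have htwo : q ^ 2 * t (n + 1) = q * a (n + 1) + a (n + 2) + t (n + 3) := by
    simp only [t, digitValue_tail_eq hq ha.1 (n + 1), digitValue_tail_eq hq ha.1 (n + 2)]
    field_simp
    ring
  have hlow : (2 - q) / (q - 1) = 1 / (q - 1) - 1 := by field_simp; ring
  rcases Nat.le_one_iff_eq_zero_or_eq_one.1 (ha.1 (n + 1)) with h0 | h1
  · have hn : a n = 1 := by have := ha.1 n; omega
    have hlt := digitValue_tail_lt_one_of_eq_zero hq hq2 ha huniq (heq ▸ h0 : a (n + 2) = 0)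
    have hgt := lt_digitValue_tail_of_eq_one hq hq2 ha huniq hn
    rw [← hlow, div_lt_iff₀ hq1] at hgt
    rw [h0, ← heq, h0] at htwo
    simp only [t] at htwo
    push_cast at htwo
    nlinarith
  · have hn : a n = 0 := by have := ha.1 n; omega
    have hlt := digitValue_tail_lt_one_of_eq_zero hq hq2 ha huniq hn
    have hgt := lt_digitValue_tail_of_eq_one hq hq2 ha huniq (heq ▸ h1 : a (n + 2) = 1)
    rw [← hlow, div_lt_iff₀ hq1] at hgt
    rw [h1, ← heq, h1] at htwo
    simp only [t] at htwo
    push_cast at htwo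
    rw [show n + 2 + 1 = n + 3 from rfl] at hgt
    nlinarith [mul_lt_mul_of_pos_right hlt (by positivity : (0 : ℝ) < q ^ 2)]

end UniqueExpansion

lemma constant_or_eventually_alternating {a : ℕ → ℕ} (ha : ∀ n, a n ≤ 1)
    (halt : ∀ n, a n ≠ a (n + 1) → a (n + 1) ≠ a (n + 2)) :
    (∀ n, a n = 0) ∨ (∀ n, a n = 1) ∨
      (∃ k, (∀ n < k, a n = 0) ∧ ∀ n, k ≤ n → a n = (n - k + 1) % 2) ∨
      (∃ k, (∀ n < k, a n = 1) ∧ ∀ n, k ≤ n → a n = (n - k) % 2) := by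
  by_cases hconst : ∀ n, a n = a (n + 1)
  · have h : ∀ n, a n = a 0 := fun n => by
      induction n with
      | zero => rfl
      | succ n ih => rw [← hconst, ih]
    rcases Nat.le_one_iff_eq_zero_or_eq_one.1 (ha 0) with h0 | h1
    exacts [Or.inl fun n => (h n).trans h0, Or.inr <| Or.inl fun n => (h n).trans h1]
  push Not at hconst
  classical
  set k := Nat.find hconst
  have hprefix : ∀ n ≤ k, a n = a 0 := fun n hn => by
    induction n with
    | zero => rfl
    | succ n ih => rw [← ih (by omega)]; exact (not_not.1 (Nat.find_min hconst (by omega))).symm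
  have hchange : ∀ n, k ≤ n → a n ≠ a (n + 1) := fun n hn => by
    induction n, hn using Nat.le_induction with
    | base => exact Nat.find_spec hconst
    | succ n _ ih => exact halt n ih
  have htail : ∀ n, k ≤ n → a n = (a 0 + (n - k)) % 2 := fun n hn => by
    induction n, hn using Nat.le_induction with
    | base =>
      rw [Nat.sub_self, add_zero, hprefix k le_rfl, Nat.mod_eq_of_lt (by have := ha 0; omega)]
    | succ n hkn ih => have := ha n; have := ha (n + 1); have := hchange n hkn; omega
  rcases Nat.le_one_iff_eq_zero_or_eq_one.1 (ha 0) with h0 | h1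
  · refine Or.inr <| Or.inr <| Or.inl ⟨k + 1, fun n hn => (hprefix n (by omega)).trans h0,
      fun n hn => ?_⟩
    rw [htail n (by omega), h0]
    omega
  · refine Or.inr <| Or.inr <| Or.inr ⟨k + 1, fun n hn => (hprefix n (by omega)).trans h1,
      fun n hn => ?_⟩
    rw [htail n (by omega), h1]
    omega

lemma monotoneOn_cubic : MonotoneOn (fun x : ℝ => x ^ 3 - 2 * x ^ 2 + x - 1) (Set.Ici 1) := by
  intro x hx y hy hxy
  simp only [Set.mem_Ici] at hx hy
  nlinarith [mul_nonneg (sub_nonneg.2 hxy) (mul_nonneg (sub_nonneg.2 hx) (sub_nonneg.2 hy)),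
    mul_nonneg (sub_nonneg.2 hxy) (sq_nonneg (x - 1)),
    mul_nonneg (sub_nonneg.2 hxy) (sq_nonneg (y - 1))]

theorem stmt2_general (qf : ℝ) (hqf : qf ∈ Set.Ioo (1:ℝ) 2)
    (hqfeq : qf ^ 3 = 2 * qf ^ 2 - qf + 1)
    (q : ℝ) (hqG : (1 + Real.sqrt 5) / 2 < q) (hqqf : q ≤ qf)
    (x : ℝ)
    (a : ℕ → ℕ) (ha : IsExpansion q x a)
    (huniq : ∀ b, IsExpansion q x b → b = a) :
    (∀ n, a n = 0) ∨ (∀ n, a n = 1) ∨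
      (∃ k, (∀ n < k, a n = 0) ∧ ∀ n, k ≤ n → a n = (n - k + 1) % 2) ∨
      (∃ k, (∀ n < k, a n = 1) ∧ ∀ n, k ≤ n → a n = (n - k) % 2) := by
  have hq : 1 < q := Real.one_lt_goldenRatio.trans hqG
  have hq2 : q ≤ 2 := hqqf.trans hqf.2.le
  have hcubic : q ^ 3 - 2 * q ^ 2 + q - 1 ≤ 0 := by
    have := monotoneOn_cubic hq.le (hq.le.trans hqqf) hqqf
    simp only at this
    linarith
  exact constant_or_eventually_alternating ha.1
    (succ_ne_of_ne_of_unique hq hq2 hcubic ha huniq)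

theorem stmt2 (qf : ℝ) (hqf : qf ∈ Set.Ioo (1:ℝ) 2)
    (hqfeq : qf ^ 3 = 2 * qf ^ 2 - qf + 1)
    (q : ℝ) (hqG : (1 + Real.sqrt 5) / 2 < q) (hqqf : q ≤ qf)
    (x : ℝ) (hx : x ∈ Set.Icc (0:ℝ) (1 / (q - 1)))
    (a : ℕ → ℕ) (ha : IsExpansion q x a)
    (huniq : ∀ b, IsExpansion q x b → b = a) :
    (∀ n, a n = 0) ∨ (∀ n, a n = 1) ∨
      (∃ k, (∀ n < k, a n = 0) ∧ ∀ n, k ≤ n → a n = (n - k + 1) % 2) ∨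
      (∃ k, (∀ n < k, a n = 1) ∧ ∀ n, k ≤ n → a n = (n - k) % 2) :=
  stmt2_general qf hqf hqfeq q hqG hqqf x a ha huniq
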